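/- arXiv:1103.4994 — 2 statements merged into one kernel-verified Lean document; each statement's English description precedes it below -/
import Mathlib

section
/- Let G and H be finite simple graphs such that both the Cartesian product G□H and the lexicographic product G[H] are connected and each has at least one edge. Then G□H is strongly edge-balanced if and only if G[H] is strongly edge-balanced. -/
open SimpleGraph

/-- The lexicographic product (composition) `G[H]`. -/
def lexProd {α β : Type*} (G : SimpleGraph α) (H : SimpleGraph β) :
    SimpleGraph (α × β) where
  Adj x y := G.Adj x.1 y.1 ∨ (x.1 = y.1 ∧ H.Adj x.2 y.2)
  symm := ⟨fun x y h =>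
    h.elim (fun h' => Or.inl h'.symm) (fun ⟨he, h2⟩ => Or.inr ⟨he.symm, h2.symm⟩)⟩
  loopless := ⟨fun x h =>
    h.elim (G.loopless.irrefl x.1) (fun ⟨_, h2⟩ => H.loopless.irrefl x.2 h2)⟩

/-- The direct (tensor, Kronecker) product `G × H`. -/
def tensorProd {α β : Type*} (G : SimpleGraph α) (H : SimpleGraph β) :
    SimpleGraph (α × β) where
  Adj x y := G.Adj x.1 y.1 ∧ H.Adj x.2 y.2
  symm := ⟨fun _ _ ⟨h1, h2⟩ => ⟨h1.symm, h2.symm⟩⟩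
  loopless := ⟨fun x h => G.loopless.irrefl x.1 h.1⟩

/-- The number of edges labeled `i` by the edge labeling `f`. -/
noncomputable def edgeCount {V : Type*} (G : SimpleGraph V) (f : G.edgeSet → ZMod 2) (i : ZMod 2) : ℕ :=
  Nat.card {e : G.edgeSet // f e = i}

/-- The number of edges incident to `v` that are labeled `i` (the `i`-degree of `v`). -/
noncomputable def labDeg {V : Type*} (G : SimpleGraph V) (f : G.edgeSet → ZMod 2) (i : ZMod 2) (v : V) : ℕ :=
  Nat.card {e : G.edgeSet // f e = i ∧ v ∈ (e : Sym2 V)}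

/-- The number of vertices whose induced (partial) label is `i`: those incident to strictly
more `i`-edges than `(1-i)`-edges. -/
noncomputable def vertexCount {V : Type*} (G : SimpleGraph V) (f : G.edgeSet → ZMod 2) (i : ZMod 2) : ℕ :=
  Nat.card {v : V // labDeg G f (1 - i) v < labDeg G f i v}

/-- An edge labeling (a surjective function onto `ZMod 2`) is edge-friendly if
`|e_f(0) - e_f(1)| ≤ 1`. -/
def EdgeFriendly {V : Type*} (G : SimpleGraph V) (f : G.edgeSet → ZMod 2) : Prop :=
  Function.Surjective f ∧ |(edgeCount G f 0 : ℤ) - (edgeCount G f 1 : ℤ)| ≤ 1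

/-- A graph is strongly edge-balanced if some edge-friendly labeling `f` satisfies
`v_f(0) = v_f(1)` and `e_f(0) = e_f(1)`. -/
def StronglyEdgeBalanced {V : Type*} (G : SimpleGraph V) : Prop :=
  ∃ f : G.edgeSet → ZMod 2, EdgeFriendly G f ∧
    vertexCount G f 0 = vertexCount G f 1 ∧ edgeCount G f 0 = edgeCount G f 1

/-!
A connected graph with an edge is strongly edge-balanced exactly when its number of edges is
even, and `G □ H`, `G[H]` have edge numbers `e(G)·|H| + |G|·e(H)` and `e(G)·|H|² + |G|·e(H)`
of the same parity.

Evenness is clearly necessary. Conversely, the edges of a connected graph with an even number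
of edges split into paths `x - c - y` of length two (remove an edge `uw` at a root `u`, then
recurse on the edges reaching `w` and on the remaining ones, which reach `u`). Orient these
paths so that each vertex is an `x`-end and a `y`-end equally often up to one (two paths with a
common end `v` are merged into one path and split again after orienting it), and label
`c - x` by `0` and `c - y` by `1`. Both labels then have equally many edges and at each vertex
the two labelled degrees differ by at most one; summing these differences over all vertices
gives zero, so as many vertices are labelled `0` as `1`.
-/

open Finset

section Labeling

variable {V : Type*} (G : SimpleGraph V) (f : G.edgeSet → ZMod 2)

lemma edgeCount_zero_add_edgeCount_one [Finite V] :
    edgeCount G f 0 + edgeCount G f 1 = Nat.card G.edgeSet := by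
  have hne : ∀ e, ¬f e = 0 ↔ f e = 1 := fun e => by generalize f e = i; revert i; decide
  rw [edgeCount, edgeCount, ← Nat.card_congr (Equiv.subtypeEquivRight hne), ← Nat.card_sum,
    Nat.card_congr (Equiv.sumCompl _)]

lemma StronglyEdgeBalanced.even_natCard_edgeSet [Finite V] {G : SimpleGraph V}
    (h : StronglyEdgeBalanced G) : Even (Nat.card G.edgeSet) := by
  obtain ⟨f, -, -, he⟩ := h
  exact ⟨edgeCount G f 1, by rw [← edgeCount_zero_add_edgeCount_one G f, he]⟩

lemma EdgeFriendly.of_edgeCount_eq (h : edgeCount G f 0 = edgeCount G f 1)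
    (hpos : 0 < edgeCount G f 0) : EdgeFriendly G f := by
  refine ⟨fun i => ?_, by simp [h]⟩
  have hi : 0 < edgeCount G f i := by
    obtain rfl | rfl : i = 0 ∨ i = 1 := by revert i; decide
    exacts [hpos, h ▸ hpos]
  obtain ⟨⟨e, he⟩⟩ := (Nat.card_pos_iff.mp hi).1
  exact ⟨e, he⟩

lemma sum_labDeg_eq_two_mul_edgeCount [Fintype V] (i : ZMod 2) :
    ∑ v, labDeg G f i v = 2 * edgeCount G f i := by
  classical
  simp only [labDeg, edgeCount, Nat.card_eq_fintype_card, Fintype.card_subtype, card_filter]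
  rw [sum_comm, mul_sum]
  refine sum_congr rfl fun e _ => ?_
  by_cases he : f e = i
  · simp only [he, true_and, ← card_filter, if_true, mul_one]
    rw [← Sym2.card_toFinset_of_not_isDiag _ (G.not_isDiag_of_mem_edgeSet e.2)]
    congr 1
    ext v
    simp
  · simp [he]

lemma card_filter_pos_eq_card_filter_neg {ι : Type*} [Fintype ι] (D : ι → ℤ)
    (hD : ∀ i, |D i| ≤ 1) (hsum : ∑ i, D i = 0) : #{i | 0 < D i} = #{i | D i < 0} := by
  have hsplit : ∀ i, D i = (if 0 < D i then 1 else 0) - (if D i < 0 then 1 else 0) := fun i => by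
    have := abs_le.mp (hD i)
    split_ifs <;> omega
  rw [sum_congr rfl fun i _ => hsplit i, sum_sub_distrib, ← natCast_card_filter,
    ← natCast_card_filter, sub_eq_zero] at hsum
  exact_mod_cast hsum

lemma vertexCount_zero_eq_vertexCount_one [Fintype V]
    (hbal : ∀ v, |(labDeg G f 0 v : ℤ) - labDeg G f 1 v| ≤ 1)
    (he : edgeCount G f 0 = edgeCount G f 1) : vertexCount G f 0 = vertexCount G f 1 := by
  classical
  have hsum : ∑ v, ((labDeg G f 0 v : ℤ) - labDeg G f 1 v) = 0 := by
    have h := sum_labDeg_eq_two_mul_edgeCount G f 0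
    rw [he, ← sum_labDeg_eq_two_mul_edgeCount G f 1] at h
    rw [sum_sub_distrib, sub_eq_zero]
    exact_mod_cast h
  have h := card_filter_pos_eq_card_filter_neg _ hbal hsum
  simp only [vertexCount, Nat.card_eq_fintype_card, Fintype.card_subtype, sub_zero, sub_self]
  convert h using 3 <;> simp

lemma natCard_subtype_mem_eq_card (m : Multiset (Sym2 V)) (hm : m.Nodup)
    (hmG : ∀ e ∈ m, e ∈ G.edgeSet) :
    Nat.card {e : G.edgeSet // (e : Sym2 V) ∈ m} = Multiset.card m := by
  classical
  rw [Nat.card_congr (Equiv.subtypeSubtypeEquivSubtype (hmG _)),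
    Nat.card_congr (Equiv.subtypeEquivRight fun e => (Multiset.mem_toFinset (s := m)).symm),
    Nat.card_eq_fintype_card, Fintype.card_coe, Multiset.toFinset_card_of_nodup hm]

variable {f} {i : ZMod 2} {m : Multiset (Sym2 V)}

lemma edgeCount_eq_card_of_forall_iff (hm : m.Nodup) (hmG : ∀ e ∈ m, e ∈ G.edgeSet)
    (hf : ∀ e, f e = i ↔ (e : Sym2 V) ∈ m) : edgeCount G f i = Multiset.card m := by
  rw [edgeCount, Nat.card_congr (Equiv.subtypeEquivRight hf),
    natCard_subtype_mem_eq_card G m hm hmG]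

lemma labDeg_eq_card_filter_of_forall_iff [DecidableEq V] (hm : m.Nodup)
    (hmG : ∀ e ∈ m, e ∈ G.edgeSet) (hf : ∀ e, f e = i ↔ (e : Sym2 V) ∈ m) (v : V) :
    labDeg G f i v = Multiset.card (m.filter (v ∈ ·)) := by
  rw [labDeg, Nat.card_congr (Equiv.subtypeEquivRight
      (q := fun e : G.edgeSet => (e : Sym2 V) ∈ m.filter (v ∈ ·))
      fun e => by rw [hf, Multiset.mem_filter]),
    natCard_subtype_mem_eq_card G _ (hm.filter _) fun e he => hmG e (Multiset.mem_of_mem_filter he)]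

end Labeling

section Cherries

variable {V : Type*}

/-- A triple `(c, x, y)` stands for the path `x - c - y`. -/
def cherryEdges (L : Multiset (V × V × V)) : Multiset (Sym2 V) :=
  L.map (fun t => s(t.1, t.2.1)) + L.map (fun t => s(t.1, t.2.2))

@[simp] lemma cherryEdges_cons (t : V × V × V) (L : Multiset (V × V × V)) :
    cherryEdges (t ::ₘ L) = s(t.1, t.2.1) ::ₘ s(t.1, t.2.2) ::ₘ cherryEdges L := by
  simp [cherryEdges, Multiset.add_cons, Multiset.cons_swap]

@[simp] lemma cherryEdges_add (L L' : Multiset (V × V × V)) :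
    cherryEdges (L + L') = cherryEdges L + cherryEdges L' := by
  simp only [cherryEdges, Multiset.map_add]
  abel

@[simp] lemma card_cherryEdges (L : Multiset (V × V × V)) :
    Multiset.card (cherryEdges L) = 2 * Multiset.card L := by
  simp [cherryEdges, two_mul]

end Cherries

section EdgeReach

variable {V : Type*} {s t : Finset (Sym2 V)} {a b u w : V}

def EdgeReach (s : Finset (Sym2 V)) : V → V → Prop :=
  Relation.ReflTransGen fun x y => s(x, y) ∈ s

lemma EdgeReach.trans (h : EdgeReach s a b) (h' : EdgeReach s b u) : EdgeReach s a u :=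
  Relation.ReflTransGen.trans h h'

lemma EdgeReach.of_mem {e : Sym2 V} (he : e ∈ s) (ha : a ∈ e) (hb : b ∈ e) :
    EdgeReach s a b := by
  induction e with
  | h x y =>
    have hyx : s(y, x) ∈ s := by rwa [Sym2.eq_swap]
    rcases Sym2.mem_iff.mp ha with rfl | rfl <;> rcases Sym2.mem_iff.mp hb with rfl | rfl
    exacts [.refl, .single he, .single hyx, .refl]

lemma edgeReach_iff_of_mk_mem {x y : V} (hxy : s(x, y) ∈ s) :
    EdgeReach s x u ↔ EdgeReach s y u :=
  ⟨(EdgeReach.of_mem hxy (Sym2.mem_mk_right x y) (Sym2.mem_mk_left x y)).trans,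
    (EdgeReach.of_mem hxy (Sym2.mem_mk_left x y) (Sym2.mem_mk_right x y)).trans⟩

lemma EdgeReach.restrict {P : V → Prop} (hP : ∀ x y, s(x, y) ∈ s → P x → s(x, y) ∈ t ∧ P y)
    (h : EdgeReach s a b) (ha : P a) : EdgeReach t a b := by
  induction h using Relation.ReflTransGen.head_induction_on with
  | refl => exact .refl
  | head hac _ ih => exact .head (hP _ _ hac ha).1 (ih (hP _ _ hac ha).2)

lemma EdgeReach.erase [DecidableEq V] (h : EdgeReach s a u) :
    EdgeReach (s.erase s(u, w)) a u ∨ EdgeReach (s.erase s(u, w)) a w := by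
  induction h using Relation.ReflTransGen.head_induction_on with
  | refl => exact Or.inl .refl
  | @head a c hac _ ih =>
    by_cases he : s(a, c) = s(u, w)
    · rcases Sym2.eq_iff.mp he with ⟨rfl, -⟩ | ⟨rfl, -⟩
      exacts [Or.inl .refl, Or.inr .refl]
    · exact ih.imp (.head (mem_erase.mpr ⟨he, hac⟩)) (.head (mem_erase.mpr ⟨he, hac⟩))

def IsRootedAt (s : Finset (Sym2 V)) (u : V) : Prop :=
  ∀ e ∈ s, ∀ a ∈ e, EdgeReach s a u

lemma IsRootedAt.exists_mk_mem (hs : IsRootedAt s u) (hne : s.Nonempty) :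
    ∃ w, s(u, w) ∈ s := by
  obtain ⟨e, he⟩ := hne
  induction e with
  | h a b =>
    rcases (hs _ he a (Sym2.mem_mk_left a b)).cases_tail with rfl | ⟨c, -, hcu⟩
    · exact ⟨b, he⟩
    · exact ⟨c, by rwa [Sym2.eq_swap]⟩

lemma isRootedAt_of_mem_iff_edgeReach {C : Finset (Sym2 V)}
    (hC : ∀ e, e ∈ C ↔ e ∈ t ∧ ∀ y ∈ e, EdgeReach t y w) : IsRootedAt C w := by
  intro e he a ha
  refine EdgeReach.restrict (P := (EdgeReach t · w)) (fun x y hxy hx => ⟨?_, ?_⟩)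
    (((hC e).mp he).2 a ha) (((hC e).mp he).2 a ha)
  · refine (hC _).mpr ⟨hxy, fun z hz => ?_⟩
    rcases Sym2.mem_iff.mp hz with rfl | rfl
    exacts [hx, (edgeReach_iff_of_mk_mem hxy).mp hx]
  · exact (edgeReach_iff_of_mk_mem hxy).mp hx

lemma IsRootedAt.of_mem_iff_not_edgeReach [DecidableEq V] (hs : IsRootedAt s u)
    {R : Finset (Sym2 V)} (hR : ∀ e, e ∈ R ↔
      e ∈ s.erase s(u, w) ∧ ¬∀ y ∈ e, EdgeReach (s.erase s(u, w)) y w) :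
    IsRootedAt R u := by
  intro e he a ha
  obtain ⟨het, hnot⟩ := (hR e).mp he
  have haw : ¬EdgeReach (s.erase s(u, w)) a w := fun haw =>
    hnot fun y hy => (EdgeReach.of_mem het hy ha).trans haw
  have hau := ((hs e (mem_of_mem_erase het) a ha).erase).resolve_right haw
  refine EdgeReach.restrict (P := (¬EdgeReach _ · w)) (fun x y hxy hx => ⟨?_, ?_⟩) hau haw
  · exact (hR _).mpr ⟨hxy, fun hall => hx (hall x (Sym2.mem_mk_left x y))⟩
  · exact fun hy => hx ((edgeReach_iff_of_mk_mem hxy).mpr hy)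

theorem IsRootedAt.exists_cherryEdges [DecidableEq V] (hs : IsRootedAt s u) :
    ∃ L, s.val = cherryEdges L ∨ ∃ z, s.val = s(u, z) ::ₘ cherryEdges L := by
  induction s using Finset.strongInduction generalizing u with
  | H s ih =>
  rcases s.eq_empty_or_nonempty with rfl | hne
  · exact ⟨0, Or.inl rfl⟩
  obtain ⟨w, huw⟩ := hs.exists_mk_mem hne
  set t := s.erase s(u, w)
  classical
  -- `t` splits into the edges reaching `w` and the rest, which all reach `u`
  set C := t.filter fun e => ∀ y ∈ e, EdgeReach t y w
  set R := t.filter fun e => ¬∀ y ∈ e, EdgeReach t y w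
  have hC : IsRootedAt C w := isRootedAt_of_mem_iff_edgeReach fun e => mem_filter
  have hR : IsRootedAt R u := hs.of_mem_iff_not_edgeReach fun e => mem_filter
  have hs_val : s.val = s(u, w) ::ₘ (C.val + R.val) := by
    rw [filter_val, filter_val, Multiset.filter_add_not, erase_val,
      Multiset.cons_erase (mem_def.mp huw)]
  have htsub : t ⊂ s := erase_ssubset huw
  obtain ⟨L₁, h₁⟩ := ih C ((filter_subset _ _).trans_ssubset htsub) hC
  obtain ⟨L₂, h₂⟩ := ih R ((filter_subset _ _).trans_ssubset htsub) hR
  rcases h₁ with h₁ | ⟨z₁, h₁⟩ <;> rcases h₂ with h₂ | ⟨z₂, h₂⟩ <;> rw [h₁, h₂] at hs_val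
  · exact ⟨L₁ + L₂, Or.inr ⟨w, by rw [hs_val, cherryEdges_add]⟩⟩
  · exact ⟨(u, w, z₂) ::ₘ (L₁ + L₂), Or.inl (by simp [hs_val, Multiset.add_cons])⟩
  · exact ⟨(w, u, z₁) ::ₘ (L₁ + L₂), Or.inl (by simp [hs_val, Sym2.eq_swap])⟩
  · exact ⟨(w, u, z₁) ::ₘ (L₁ + L₂), Or.inr ⟨z₂, by
      simp [hs_val, Multiset.add_cons, Sym2.eq_swap, Multiset.cons_swap]⟩⟩

theorem IsRootedAt.exists_eq_cherryEdges_of_even [DecidableEq V] (hs : IsRootedAt s u)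
    (heven : Even #s) : ∃ L, s.val = cherryEdges L := by
  obtain ⟨L, hL | ⟨z, hL⟩⟩ := hs.exists_cherryEdges
  · exact ⟨L, hL⟩
  · have hcard := congrArg Multiset.card hL
    rw [card_val, Multiset.card_cons, card_cherryEdges] at hcard
    exact absurd (hcard ▸ heven) (by simp [parity_simps])

end EdgeReach

lemma Multiset.exists_cons_cons_of_one_lt_card_filter {α : Type*} {p : α → Prop}
    [DecidablePred p] {m : Multiset α} (h : 1 < Multiset.card (m.filter p)) :
    ∃ a b m', m = a ::ₘ b ::ₘ m' ∧ p a ∧ p b := by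
  obtain ⟨u, hu⟩ := Multiset.le_iff_exists_add.mp (Multiset.filter_le p m)
  obtain ⟨a, ha⟩ := Multiset.card_pos_iff_exists_mem.mp (by omega : 0 < Multiset.card (m.filter p))
  obtain ⟨r, hr⟩ := Multiset.exists_cons_of_mem ha
  obtain ⟨b, hb⟩ := Multiset.card_pos_iff_exists_mem.mp
    (by rw [hr, Multiset.card_cons] at h; omega : 0 < Multiset.card r)
  obtain ⟨r', rfl⟩ := Multiset.exists_cons_of_mem hb
  refine ⟨a, b, r' + u, by rw [hu, hr]; simp, (Multiset.mem_filter.mp ha).2, ?_⟩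
  exact (Multiset.mem_filter.mp (hr ▸ Multiset.mem_cons_of_mem hb)).2

section Orientation

variable {κ V : Type*}

def IsReorientation (p q : κ × V × V) : Prop :=
  q = p ∨ q = (p.1, p.2.2, p.2.1)

lemma cherryEdges_eq_of_rel {L L' : Multiset (V × V × V)}
    (h : Multiset.Rel IsReorientation L L') : cherryEdges L' = cherryEdges L := by
  induction h with
  | zero => rfl
  | cons hpq _ ih =>
    rcases hpq with rfl | rfl <;> simp only [cherryEdges_cons, ih]
    exact Multiset.cons_swap _ _ _

variable [DecidableEq V]

def imbalance (m : Multiset (κ × V × V)) (v : V) : ℤ :=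
  (m.map fun p => (if p.2.1 = v then 1 else 0) - if p.2.2 = v then 1 else 0).sum

@[simp] lemma imbalance_cons (p : κ × V × V) (m : Multiset (κ × V × V)) (v : V) :
    imbalance (p ::ₘ m) v =
      (if p.2.1 = v then 1 else 0) - (if p.2.2 = v then 1 else 0) + imbalance m v := by
  simp [imbalance]

lemma abs_imbalance_le (m : Multiset (κ × V × V)) (v : V) :
    |imbalance m v| ≤ Multiset.card (m.filter fun p => p.2.1 = v ∨ p.2.2 = v) := by
  induction m using Multiset.induction_on with
  | empty => simp [imbalance]
  | cons p m ih =>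
    rw [imbalance_cons, Multiset.filter_cons]
    split_ifs <;> simp_all [abs_le] <;> omega

theorem exists_rel_isReorientation_abs_imbalance_le_one (m : Multiset (κ × V × V)) :
    ∃ m', Multiset.Rel IsReorientation m m' ∧ ∀ v, |imbalance m' v| ≤ 1 := by
  induction hn : Multiset.card m using Nat.strong_induction_on generalizing m with
  | _ n ih =>
  by_cases hex : ∃ v, 1 < Multiset.card (m.filter fun p => p.2.1 = v ∨ p.2.2 = v)
  · obtain ⟨v, hv⟩ := hex
    obtain ⟨p₁, p₂, m₂, rfl, hp₁, hp₂⟩ := Multiset.exists_cons_cons_of_one_lt_card_filter hv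
    -- merge the paths `a - v` and `v - b` into `a - b`, orient, and split again at `v`
    set a := if p₁.2.1 = v then p₁.2.2 else p₁.2.1
    set b := if p₂.2.1 = v then p₂.2.2 else p₂.2.1
    have reorient : ∀ p : κ × V × V, (p.2.1 = v ∨ p.2.2 = v) →
        IsReorientation p (p.1, (if p.2.1 = v then p.2.2 else p.2.1), v) ∧
        IsReorientation p (p.1, v, (if p.2.1 = v then p.2.2 else p.2.1)) := by
      rintro ⟨c, x, y⟩ hp
      by_cases hx : x = v
      · subst hx
        simp [IsReorientation]
      · obtain rfl : y = v := hp.resolve_left hx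
        simp [IsReorientation, hx]
    obtain ⟨m', hrel, hbal⟩ := ih (n - 1) (by simp at hn; omega) ((p₁.1, a, b) ::ₘ m₂)
      (by simp at hn ⊢; omega)
    obtain ⟨q, m₂', hq, hrel₂, rfl⟩ := Multiset.rel_cons_left.mp hrel
    rcases hq with rfl | rfl
    · refine ⟨(p₁.1, a, v) ::ₘ (p₂.1, v, b) ::ₘ m₂',
        .cons (reorient p₁ hp₁).1 (.cons (reorient p₂ hp₂).2 hrel₂), fun x => ?_⟩
      convert hbal x using 2
      simp only [imbalance_cons]
      ring
    · refine ⟨(p₁.1, v, a) ::ₘ (p₂.1, b, v) ::ₘ m₂',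
        .cons (reorient p₁ hp₁).2 (.cons (reorient p₂ hp₂).1 hrel₂), fun x => ?_⟩
      convert hbal x using 2
      simp only [imbalance_cons]
      ring
  · simp only [not_exists, not_lt] at hex
    exact ⟨m, Multiset.rel_refl_of_refl_on fun p _ => Or.inl rfl,
      fun v => (abs_imbalance_le m v).trans (by exact_mod_cast hex v)⟩

end Orientation

section CherryLabeling

variable {V : Type*} [DecidableEq V]

lemma card_filter_mem_sub_card_filter_mem (L : Multiset (V × V × V))
    (hL : ∀ t ∈ L, t.1 ≠ t.2.1 ∧ t.1 ≠ t.2.2) (v : V) :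
    (Multiset.card ((L.map fun t => s(t.1, t.2.1)).filter (v ∈ ·)) : ℤ) -
      Multiset.card ((L.map fun t => s(t.1, t.2.2)).filter (v ∈ ·)) = imbalance L v := by
  induction L using Multiset.induction_on with
  | empty => simp [imbalance]
  | cons t L ih =>
    obtain ⟨c, x, y⟩ := t
    simp only [Multiset.mem_cons, forall_eq_or_imp] at hL
    obtain ⟨⟨hcx, hcy⟩, hL⟩ := hL
    rw [imbalance_cons, ← ih hL]
    simp only [Multiset.map_cons, Multiset.filter_cons, Sym2.mem_iff, Multiset.card_add,
      apply_ite Multiset.card, Multiset.card_singleton, Multiset.card_zero]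
    rcases eq_or_ne c v with rfl | hc
    · simp [hcx.symm, hcy.symm]
    · by_cases hx : x = v <;> by_cases hy : y = v <;>
        simp [hc.symm, hx, hy, eq_comm (a := v)] <;> omega

theorem stronglyEdgeBalanced_of_cherryEdges [Fintype V] (G : SimpleGraph V) [DecidableRel G.Adj]
    {L : Multiset (V × V × V)} (hL : G.edgeFinset.val = cherryEdges L)
    (hE : G.edgeSet.Nonempty) (hbal : ∀ v, |imbalance L v| ≤ 1) : StronglyEdgeBalanced G := by
  set m₀ := L.map fun t => s(t.1, t.2.1)
  set m₁ := L.map fun t => s(t.1, t.2.2)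
  let f : G.edgeSet → ZMod 2 := fun e => if (e : Sym2 V) ∈ m₀ then 0 else 1
  have hmem (e : Sym2 V) : e ∈ G.edgeSet ↔ e ∈ m₀ ∨ e ∈ m₁ := by
    rw [← mem_edgeFinset, ← Finset.mem_val, hL, cherryEdges, Multiset.mem_add]
  obtain ⟨hnd₀, hnd₁, hdisj⟩ := Multiset.nodup_add.mp (hL ▸ G.edgeFinset.nodup)
  have hf₀ (e : G.edgeSet) : f e = 0 ↔ (e : Sym2 V) ∈ m₀ := by
    by_cases h : (e : Sym2 V) ∈ m₀ <;> simp [f, h]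
  have hf₁ (e : G.edgeSet) : f e = 1 ↔ (e : Sym2 V) ∈ m₁ := by
    by_cases h : (e : Sym2 V) ∈ m₀
    · have h₁ : (e : Sym2 V) ∉ m₁ := Multiset.disjoint_left.mp hdisj h
      simp [f, h, h₁]
    · simp [f, h, ((hmem e).mp e.2).resolve_left h]
  have hG₀ (e) (he : e ∈ m₀) : e ∈ G.edgeSet := (hmem e).mpr (.inl he)
  have hG₁ (e) (he : e ∈ m₁) : e ∈ G.edgeSet := (hmem e).mpr (.inr he)
  have he₀ : edgeCount G f 0 = Multiset.card L := by
    rw [edgeCount_eq_card_of_forall_iff G hnd₀ hG₀ hf₀, Multiset.card_map]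
  have he₁ : edgeCount G f 1 = Multiset.card L := by
    rw [edgeCount_eq_card_of_forall_iff G hnd₁ hG₁ hf₁, Multiset.card_map]
  have hL_ne : ∀ t ∈ L, t.1 ≠ t.2.1 ∧ t.1 ≠ t.2.2 := fun t ht =>
    ⟨(hG₀ _ (Multiset.mem_map_of_mem _ ht)).ne, (hG₁ _ (Multiset.mem_map_of_mem _ ht)).ne⟩
  have hdeg (v : V) : (labDeg G f 0 v : ℤ) - labDeg G f 1 v = imbalance L v := by
    rw [labDeg_eq_card_filter_of_forall_iff G hnd₀ hG₀ hf₀,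
      labDeg_eq_card_filter_of_forall_iff G hnd₁ hG₁ hf₁,
      card_filter_mem_sub_card_filter_mem L hL_ne]
  have hpos : 0 < edgeCount G f 0 := by
    obtain ⟨e, he⟩ := hE
    rcases (hmem e).mp he with h | h <;> obtain ⟨t, ht, -⟩ := Multiset.mem_map.mp h <;>
      exact he₀ ▸ Multiset.card_pos_iff_exists_mem.mpr ⟨t, ht⟩
  exact ⟨f, .of_edgeCount_eq G f (he₀.trans he₁.symm) hpos,
    vertexCount_zero_eq_vertexCount_one G f (fun v => hdeg v ▸ hbal v) (he₀.trans he₁.symm),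
    he₀.trans he₁.symm⟩

end CherryLabeling

lemma SimpleGraph.Connected.isRootedAt_edgeFinset {V : Type*} {G : SimpleGraph V}
    [Fintype G.edgeSet] (hG : G.Connected) (u : V) : IsRootedAt G.edgeFinset u :=
  fun _ _ a _ => Relation.ReflTransGen.mono (fun x y (h : G.Adj x y) => G.mem_edgeFinset.mpr h)
    a u ((reachable_iff_reflTransGen a u).mp (hG a u))

theorem SimpleGraph.Connected.stronglyEdgeBalanced_iff {V : Type*} [Fintype V]
    {G : SimpleGraph V} (hG : G.Connected) (hE : G.edgeSet.Nonempty) :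
    StronglyEdgeBalanced G ↔ Even (Nat.card G.edgeSet) := by
  classical
  refine ⟨StronglyEdgeBalanced.even_natCard_edgeSet, fun heven => ?_⟩
  obtain ⟨L, hL⟩ := (hG.isRootedAt_edgeFinset hG.nonempty.some).exists_eq_cherryEdges_of_even
    (by rwa [edgeFinset_card, ← Nat.card_eq_fintype_card])
  obtain ⟨L', hrel, hbal⟩ := exists_rel_isReorientation_abs_imbalance_le_one L
  exact stronglyEdgeBalanced_of_cherryEdges G (hL.trans (cherryEdges_eq_of_rel hrel).symm) hE hbal

section Products

variable {α β : Type*} (G : SimpleGraph α) (H : SimpleGraph β)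

instance [DecidableEq α] [DecidableRel G.Adj] [DecidableRel H.Adj] :
    DecidableRel (lexProd G H).Adj :=
  fun x y => inferInstanceAs (Decidable (G.Adj x.1 y.1 ∨ (x.1 = y.1 ∧ H.Adj x.2 y.2)))

lemma degree_lexProd [Fintype α] [Fintype β] [DecidableEq α] [DecidableRel G.Adj]
    [DecidableRel H.Adj] (x : α × β) :
    (lexProd G H).degree x = G.degree x.1 * Fintype.card β + H.degree x.2 := by
  have hN : (lexProd G H).neighborFinset x = (G.neighborFinset x.1 ×ˢ univ).disjUnion
      ({x.1} ×ˢ H.neighborFinset x.2)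
      (disjoint_product.mpr (Or.inl (G.neighborFinset_disjoint_singleton x.1))) := by
    ext ⟨a, b⟩
    simp only [mem_neighborFinset, mem_disjUnion, mem_product, mem_univ, and_true, mem_singleton]
    exact or_congr Iff.rfl (by rw [eq_comm, and_comm])
  rw [← card_neighborFinset_eq_degree, hN, card_disjUnion, card_product, card_product, card_univ,
    card_singleton, one_mul, card_neighborFinset_eq_degree, card_neighborFinset_eq_degree]

lemma SimpleGraph.two_mul_natCard_edgeSet {V : Type*} [Fintype V] (G : SimpleGraph V)
    [∀ v, Fintype (G.neighborSet v)] : 2 * Nat.card G.edgeSet = ∑ v, G.degree v := by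
  classical
  convert (sum_degrees_eq_twice_card_edges G).symm using 3
  rw [edgeFinset_card, Nat.card_eq_fintype_card]

lemma natCard_edgeSet_boxProd [Finite α] [Finite β] :
    Nat.card (G □ H).edgeSet =
      Nat.card G.edgeSet * Nat.card β + Nat.card α * Nat.card H.edgeSet := by
  classical
  cases nonempty_fintype α
  cases nonempty_fintype β
  apply Nat.eq_of_mul_eq_mul_left two_pos
  have hdeg (a : α) (b : β) : (G □ H).degree (a, b) = G.degree a + H.degree b :=
    degree_boxProd ..
  rw [two_mul_natCard_edgeSet, Fintype.sum_prod_type]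
  simp only [hdeg, sum_add_distrib, sum_const, card_univ, smul_eq_mul, ← mul_sum,
    ← two_mul_natCard_edgeSet, Fintype.card_eq_nat_card]
  ring

lemma natCard_edgeSet_lexProd [Finite α] [Finite β] :
    Nat.card (lexProd G H).edgeSet =
      Nat.card G.edgeSet * Nat.card β ^ 2 + Nat.card α * Nat.card H.edgeSet := by
  classical
  cases nonempty_fintype α
  cases nonempty_fintype β
  apply Nat.eq_of_mul_eq_mul_left two_pos
  have hdeg (a : α) (b : β) :
      (lexProd G H).degree (a, b) = G.degree a * Fintype.card β + H.degree b :=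
    degree_lexProd ..
  rw [two_mul_natCard_edgeSet, Fintype.sum_prod_type]
  simp only [hdeg, sum_add_distrib, sum_const, card_univ, smul_eq_mul, ← mul_sum, ← sum_mul,
    ← two_mul_natCard_edgeSet, Fintype.card_eq_nat_card]
  ring

lemma even_natCard_edgeSet_boxProd_iff_lexProd [Finite α] [Finite β] :
    Even (Nat.card (G □ H).edgeSet) ↔ Even (Nat.card (lexProd G H).edgeSet) := by
  rw [natCard_edgeSet_boxProd, natCard_edgeSet_lexProd]
  simp [parity_simps]

end Products

theorem boxProd_stronglyEdgeBalanced_iff_lexProd {α β : Type*} [Fintype α] [Fintype β]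
    (G : SimpleGraph α) (H : SimpleGraph β)
    (hconnBox : (G.boxProd H).Connected) (hconnLex : (lexProd G H).Connected)
    (heBox : (G.boxProd H).edgeSet.Nonempty) (heLex : (lexProd G H).edgeSet.Nonempty) :
    StronglyEdgeBalanced (G.boxProd H) ↔ StronglyEdgeBalanced (lexProd G H) := by
  rw [hconnBox.stronglyEdgeBalanced_iff heBox, hconnLex.stronglyEdgeBalanced_iff heLex]
  exact even_natCard_edgeSet_boxProd_iff_lexProd G H
end

section
/- Let G be an r-regular finite simple graph on n vertices with r odd, n ≡ 0 (mod 4), and at least one edge. Then every edge-friendly labeling f of G satisfies (r+1)·|v_f(0) − v_f(1)| ≤ (r−1)·n; in particular, every element k of EBI(G) satisfies (r+1)·k ≤ (r−1)·n. -/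
open SimpleGraph

/-- `|v_f(0) - v_f(1)|` for an edge labeling `f`. -/
noncomputable def ebIndex {V : Type*} (G : SimpleGraph V) (f : G.edgeSet → ZMod 2) : ℕ :=
  ((vertexCount G f 0 : ℤ) - (vertexCount G f 1 : ℤ)).natAbs

/-- The edge-balanced index set of `G`. -/
def EBI {V : Type*} (G : SimpleGraph V) : Set ℕ :=
  {k | ∃ f : G.edgeSet → ZMod 2, EdgeFriendly G f ∧ ebIndex G f = k}


/-!
Since `n ≡ 0 (mod 4)`, the graph has `rn/2` edges, an even number, so an edge-friendly
labeling uses each label on exactly `rn/4` edges. As `r` is odd, every vertex is labeled, so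
`v_f(0) + v_f(1) = n`. A vertex labeled `i` has at least `(r+1)/2` incident `i`-edges, and the
`i`-degrees add up to `2 e_f(i) = rn/2`; hence `(r+1) v_f(i) ≤ rn`, and eliminating
`v_f(1-i) = n - v_f(i)` gives the bound.
-/

open Finset

section Labeling

variable {V : Type*} [Fintype V] {G : SimpleGraph V} (f : G.edgeSet → ZMod 2)

lemma vertexCount_eq_card (i : ZMod 2) :
    vertexCount G f i = #{v | labDeg G f (1 - i) v < labDeg G f i v} := by
  rw [vertexCount, Nat.card_eq_fintype_card, Fintype.card_subtype]

variable [DecidableRel G.Adj]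

lemma labDeg_eq_card [DecidableEq V] (i : ZMod 2) (v : V) :
    labDeg G f i v = #{e : G.edgeSet | f e = i ∧ v ∈ (e : Sym2 V)} := by
  rw [labDeg, Nat.card_eq_fintype_card, Fintype.card_subtype]

lemma labDeg_add_labDeg_one_sub (i : ZMod 2) (v : V) :
    labDeg G f i v + labDeg G f (1 - i) v = G.degree v := by
  classical
  have hne : ∀ e : G.edgeSet, ¬f e = i ↔ f e = 1 - i := by
    intro e
    generalize f e = a
    revert a i
    decide
  have hinc : #{e : G.edgeSet | v ∈ (e : Sym2 V)} = G.degree v := by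
    rw [← card_incidenceSet_eq_degree, ← Fintype.card_subtype, ← Nat.card_eq_fintype_card,
      ← Nat.card_eq_fintype_card]
    exact Nat.card_congr (Equiv.subtypeSubtypeEquivSubtypeInter (· ∈ G.edgeSet) (v ∈ ·))
  rw [labDeg_eq_card, labDeg_eq_card, ← hinc, ← card_filter_add_card_filter_not
    (s := {e : G.edgeSet | v ∈ (e : Sym2 V)}) (fun e => f e = i), filter_filter, filter_filter]
  simp only [hne, and_comm]

lemma sum_labDeg (i : ZMod 2) : ∑ v, labDeg G f i v = 2 * edgeCount G f i := by
  classical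
  have hdouble := sum_card_bipartiteAbove_eq_sum_card_bipartiteBelow (s := univ)
    (t := ({e : G.edgeSet | f e = i} : Finset _)) (fun (v : V) (e : G.edgeSet) => v ∈ (e : Sym2 V))
  have hends : ∀ e : G.edgeSet,
      #((univ : Finset V).bipartiteBelow (fun v (e : G.edgeSet) => v ∈ (e : Sym2 V)) e) = 2 := by
    intro e
    rw [bipartiteBelow, ← Sym2.card_toFinset_of_not_isDiag _ (G.not_isDiag_of_mem_edgeSet e.2)]
    congr 1
    ext v
    simp [Sym2.mem_toFinset]
  simp only [bipartiteAbove, filter_filter, hends, sum_const, smul_eq_mul] at hdouble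
  rw [edgeCount, Nat.card_eq_fintype_card, Fintype.card_subtype, mul_comm, ← hdouble]
  exact sum_congr rfl fun v _ => by rw [labDeg_eq_card]

lemma two_mul_edgeCount_add_edgeCount :
    2 * (edgeCount G f 0 + edgeCount G f 1) = ∑ v, G.degree v := by
  rw [mul_add, ← sum_labDeg, ← sum_labDeg, ← sum_add_distrib]
  exact sum_congr rfl fun v _ => by simpa using labDeg_add_labDeg_one_sub f 0 v

lemma vertexCount_zero_add_vertexCount_one (hodd : ∀ v, Odd (G.degree v)) :
    vertexCount G f 0 + vertexCount G f 1 = Fintype.card V := by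
  have hlabeled : ∀ v, labDeg G f 0 v < labDeg G f 1 v ↔ ¬labDeg G f 1 v < labDeg G f 0 v := by
    intro v
    have hsum := labDeg_add_labDeg_one_sub f 0 v
    have hne : labDeg G f 0 v ≠ labDeg G f 1 v := fun heq =>
      Nat.not_even_iff_odd.mpr (hodd v) ⟨_, by rw [← hsum, sub_zero, heq]⟩
    omega
  rw [vertexCount_eq_card, vertexCount_eq_card, sub_zero, sub_self, ← card_univ,
    ← card_filter_add_card_filter_not (s := univ) (fun v => labDeg G f 1 v < labDeg G f 0 v)]
  simp only [hlabeled]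

lemma succ_mul_vertexCount_le {r : ℕ} (hreg : G.IsRegularOfDegree r) (i : ZMod 2) :
    (r + 1) * vertexCount G f i ≤ 4 * edgeCount G f i :=
  calc (r + 1) * vertexCount G f i
      ≤ ∑ v ∈ {v | labDeg G f (1 - i) v < labDeg G f i v}, 2 * labDeg G f i v := by
        rw [vertexCount_eq_card, mul_comm, ← smul_eq_mul]
        refine card_nsmul_le_sum _ _ _ fun v hv => ?_
        have hsum := labDeg_add_labDeg_one_sub f i v
        rw [hreg.degree_eq] at hsum
        rw [mem_filter] at hv
        omega
    _ ≤ ∑ v, 2 * labDeg G f i v := sum_le_sum_of_subset (filter_subset _ _)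
    _ = 4 * edgeCount G f i := by rw [← mul_sum, sum_labDeg]; ring

end Labeling

lemma edgeCount_eq_of_edgeFriendly {V : Type*} {G : SimpleGraph V} {f : G.edgeSet → ZMod 2}
    (hf : EdgeFriendly G f) (heven : Even (edgeCount G f 0 + edgeCount G f 1)) :
    edgeCount G f 0 = edgeCount G f 1 := by
  have hclose := abs_le.mp hf.2
  obtain ⟨k, hk⟩ := heven
  omega

lemma mul_abs_sub_le_of_add_eq {r a b n : ℤ} (hab : a + b = n) (ha : (r + 1) * a ≤ r * n)
    (hb : (r + 1) * b ≤ r * n) : (r + 1) * |a - b| ≤ (r - 1) * n := by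
  rcases abs_cases (a - b) with ⟨h, _⟩ | ⟨h, _⟩ <;> rw [h] <;> subst hab <;> linarith

theorem maxEBI_regular_zero_mod_four_general {V : Type*} [Fintype V]
    (G : SimpleGraph V) [DecidableRel G.Adj] {r : ℕ}
    (hreg : G.IsRegularOfDegree r) (hr : Odd r)
    (hn : Fintype.card V % 4 = 0) :
    (∀ f : G.edgeSet → ZMod 2, EdgeFriendly G f →
      ((r : ℤ) + 1) * |(vertexCount G f 0 : ℤ) - (vertexCount G f 1 : ℤ)| ≤
        ((r : ℤ) - 1) * (Fintype.card V)) ∧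
    ∀ k ∈ EBI G, ((r : ℤ) + 1) * (k : ℤ) ≤ ((r : ℤ) - 1) * (Fintype.card V) := by
  have hbound : ∀ f : G.edgeSet → ZMod 2, EdgeFriendly G f →
      ((r : ℤ) + 1) * |(vertexCount G f 0 : ℤ) - (vertexCount G f 1 : ℤ)| ≤
        ((r : ℤ) - 1) * (Fintype.card V) := by
    intro f hf
    obtain ⟨k, hk⟩ := Nat.dvd_of_mod_eq_zero hn
    have hedges : 2 * (edgeCount G f 0 + edgeCount G f 1) = r * Fintype.card V := by
      simp [two_mul_edgeCount_add_edgeCount, hreg.degree_eq, mul_comm]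
    have hbalanced := edgeCount_eq_of_edgeFriendly hf ⟨r * k, by rw [hk] at hedges; linarith⟩
    have h0 := succ_mul_vertexCount_le f hreg 0
    have h1 := succ_mul_vertexCount_le f hreg 1
    have hsplit := vertexCount_zero_add_vertexCount_one f fun v => hreg.degree_eq v ▸ hr
    refine mul_abs_sub_le_of_add_eq (by exact_mod_cast hsplit) ?_ ?_ <;> norm_cast <;> omega
  refine ⟨hbound, ?_⟩
  rintro _ ⟨f, hf, rfl⟩
  simpa [ebIndex] using hbound f hf

theorem maxEBI_regular_zero_mod_four {V : Type*} [Fintype V]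
    (G : SimpleGraph V) [DecidableRel G.Adj] {r : ℕ}
    (hreg : G.IsRegularOfDegree r) (hr : Odd r)
    (hn : Fintype.card V % 4 = 0) (he : G.edgeSet.Nonempty) :
    (∀ f : G.edgeSet → ZMod 2, EdgeFriendly G f →
      ((r : ℤ) + 1) * |(vertexCount G f 0 : ℤ) - (vertexCount G f 1 : ℤ)| ≤
        ((r : ℤ) - 1) * (Fintype.card V)) ∧
    ∀ k ∈ EBI G, ((r : ℤ) + 1) * (k : ℤ) ≤ ((r : ℤ) - 1) * (Fintype.card V) :=
  maxEBI_regular_zero_mod_four_general G hreg hr hn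
end
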